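/- Let n ≥ 1 be an integer and q > 0. Define Φ(q, z) := ∫_0^∞ e^{−v} (1 + q v)^{−n} e^{−z/(1+qv)} dv and ζ(q, n) := −1 + ∫_0^∞ (z^{n−1}/(n−1)!) e^{−2z}/Φ(q, z) dz. Then ∫_0^∞ (z^{n−1}/(n−1)!) Φ(q, z) (1 − e^{−z}/Φ(q, z))² dz = ζ(q, n), and ζ(q, n) > 0. -/

import Mathlib

/-!
Write `w z = z ^ (n - 1) / (n - 1)!`. Expanding the square, the integral is
`∫ w Φ - 2 ∫ w e^{-z} + ∫ w e^{-2z} / Φ`. The middle term is a Gamma integral equal to `1`.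
By Fubini the first is `∫ e^{-v} (1 + q v)^{-n} ∫ w z e^{-z / (1 + q v)} dz dv`, and the inner
integral is again a Gamma integral, equal to `(1 + q v)^n`; so the first term is `∫ e^{-v} = 1`.
For positivity: the integrand is nonnegative, and strictly positive for `0 < z < -log Φ(q, 0)`,
where `Φ(q, z) ≤ Φ(q, 0) < e^{-z}`; here `Φ(q, 0) < 1` because `q > 0`.
-/

open MeasureTheory Real Set

/-- `Phi n x z = ∫_0^∞ e^{−v} (1 + x v)^{−n} e^{−z/(1+xv)} dv`. -/
noncomputable def Phi (n : ℕ) (x z : ℝ) : ℝ :=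
  ∫ v in Set.Ioi (0 : ℝ),
    Real.exp (-v) * (1 + x * v) ^ (-(n : ℤ)) * Real.exp (-z / (1 + x * v))

open scoped Nat

lemma integral_pow_div_factorial_mul_exp_neg_div_Ioi (k : ℕ) {s : ℝ} (hs : 0 < s) :
    ∫ z in Ioi (0 : ℝ), z ^ k / k ! * exp (-z / s) = s ^ (k + 1) := by
  have h := integral_rpow_mul_exp_neg_mul_Ioi (a := k + 1) (by positivity) (inv_pos.2 hs)
  rw [add_sub_cancel_right, one_div, inv_inv, Real.Gamma_nat_eq_factorial] at h
  have hpow (z : ℝ) :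
      z ^ k / k ! * exp (-z / s) = (k ! : ℝ)⁻¹ * (z ^ (k : ℝ) * exp (-(s⁻¹ * z))) := by
    rw [rpow_natCast]
    ring_nf
  simp_rw [hpow]
  rw [integral_const_mul, h]
  norm_cast
  field_simp

lemma integrableOn_pow_div_factorial_mul_exp_neg_div_Ioi (k : ℕ) {s : ℝ} (hs : 0 < s) :
    IntegrableOn (fun z : ℝ => z ^ k / k ! * exp (-z / s)) (Ioi 0) :=
  Integrable.of_integral_ne_zero <| by
    rw [integral_pow_div_factorial_mul_exp_neg_div_Ioi k hs]; positivity

lemma setIntegral_pos_of_subset {X : Type*} [MeasurableSpace X] {μ : Measure X}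
    {f : X → ℝ} {s t : Set X} (hf : 0 ≤ᵐ[μ.restrict s] f) (hfi : IntegrableOn f s μ)
    (hts : t ⊆ s) (ht : 0 < μ t) (hpos : ∀ x ∈ t, 0 < f x) : 0 < ∫ x in s, f x ∂μ :=
  (setIntegral_pos_iff_support_of_nonneg_ae hf hfi).2 <|
    ht.trans_le <| measure_mono fun x hx => ⟨(hpos x hx).ne', hts hx⟩

noncomputable def phiIntegrand (n : ℕ) (q z v : ℝ) : ℝ :=
  exp (-v) * (1 + q * v) ^ (-(n : ℤ)) * exp (-z / (1 + q * v))

lemma Phi_eq_integral (n : ℕ) (q z : ℝ) :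
    Phi n q z = ∫ v in Ioi 0, phiIntegrand n q z v := rfl

section phiIntegrand

variable {n : ℕ} {q z v : ℝ}

lemma phiIntegrand_zero : phiIntegrand n q 0 v = exp (-v) * (1 + q * v) ^ (-(n : ℤ)) := by
  simp [phiIntegrand]

lemma phiIntegrand_eq_phiIntegrand_zero_mul :
    phiIntegrand n q z v = phiIntegrand n q 0 v * exp (-z / (1 + q * v)) := by
  rw [phiIntegrand_zero, phiIntegrand]

lemma measurable_phiIntegrand : Measurable fun p : ℝ × ℝ => phiIntegrand n q p.1 p.2 := by
  unfold phiIntegrand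
  fun_prop

lemma phiIntegrand_pos (hq : 0 ≤ q) (hv : 0 ≤ v) : 0 < phiIntegrand n q z v := by
  have : 0 < 1 + q * v := by positivity
  unfold phiIntegrand
  positivity

lemma phiIntegrand_le_phiIntegrand_zero (hq : 0 ≤ q) (hz : 0 ≤ z) (hv : 0 ≤ v) :
    phiIntegrand n q z v ≤ phiIntegrand n q 0 v := by
  rw [phiIntegrand_eq_phiIntegrand_zero_mul (z := z)]
  refine mul_le_of_le_one_right (phiIntegrand_pos hq hv).le (exp_le_one_iff.2 ?_)
  exact div_nonpos_of_nonpos_of_nonneg (neg_nonpos.2 hz) (by positivity)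

lemma phiIntegrand_zero_mul_exp_neg_le (hq : 0 ≤ q) (hz : 0 ≤ z) (hv : 0 ≤ v) :
    phiIntegrand n q 0 v * exp (-z) ≤ phiIntegrand n q z v := by
  rw [phiIntegrand_eq_phiIntegrand_zero_mul (z := z)]
  refine mul_le_mul_of_nonneg_left (exp_le_exp.2 ?_) (phiIntegrand_pos hq hv).le
  rw [neg_div, neg_le_neg_iff]
  exact div_le_self hz (le_add_of_nonneg_right (by positivity))

lemma phiIntegrand_zero_le_exp_neg (hq : 0 ≤ q) (hv : 0 ≤ v) :
    phiIntegrand n q 0 v ≤ exp (-v) := by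
  rw [phiIntegrand_zero, zpow_neg, zpow_natCast]
  refine mul_le_of_le_one_right (exp_pos _).le (inv_le_one_of_one_le₀ (one_le_pow₀ ?_))
  exact le_add_of_nonneg_right (by positivity)

lemma phiIntegrand_zero_lt_exp_neg (hn : n ≠ 0) (hq : 0 < q) (hv : 0 < v) :
    phiIntegrand n q 0 v < exp (-v) := by
  rw [phiIntegrand_zero, zpow_neg, zpow_natCast]
  refine mul_lt_of_lt_one_right (exp_pos _) (inv_lt_one_of_one_lt₀ (one_lt_pow₀ ?_ hn))
  exact lt_add_of_pos_right _ (by positivity)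

lemma phiIntegrand_le_exp_neg (hq : 0 ≤ q) (hz : 0 ≤ z) (hv : 0 ≤ v) :
    phiIntegrand n q z v ≤ exp (-v) :=
  (phiIntegrand_le_phiIntegrand_zero hq hz hv).trans (phiIntegrand_zero_le_exp_neg hq hv)

lemma integrableOn_phiIntegrand (hq : 0 ≤ q) (hz : 0 ≤ z) :
    IntegrableOn (phiIntegrand n q z) (Ioi 0) := by
  refine Integrable.mono' (exp_neg_integrableOn_Ioi 0 one_pos)
    (measurable_phiIntegrand.comp measurable_prodMk_left).aestronglyMeasurable ?_
  filter_upwards [ae_restrict_mem measurableSet_Ioi] with v hv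
  rw [norm_of_nonneg (phiIntegrand_pos hq (le_of_lt hv)).le, neg_one_mul]
  exact phiIntegrand_le_exp_neg hq hz (le_of_lt hv)

end phiIntegrand

section Phi

variable {n : ℕ} {q z : ℝ}

lemma measurable_Phi : Measurable (Phi n q) :=
  (measurable_phiIntegrand (n := n) (q := q)).stronglyMeasurable.integral_prod_right'.measurable

lemma Phi_pos (hq : 0 ≤ q) (hz : 0 ≤ z) : 0 < Phi n q z :=
  setIntegral_pos_of_subset
    (ae_restrict_of_forall_mem measurableSet_Ioi fun _ hv => (phiIntegrand_pos hq (le_of_lt hv)).le)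
    (integrableOn_phiIntegrand hq hz) subset_rfl (by simp)
    fun _ hv => phiIntegrand_pos hq (le_of_lt hv)

lemma Phi_le_Phi_zero (hq : 0 ≤ q) (hz : 0 ≤ z) : Phi n q z ≤ Phi n q 0 :=
  setIntegral_mono_on (integrableOn_phiIntegrand hq hz) (integrableOn_phiIntegrand hq le_rfl)
    measurableSet_Ioi fun _ hv => phiIntegrand_le_phiIntegrand_zero hq hz (le_of_lt hv)

lemma Phi_zero_mul_exp_neg_le (hq : 0 ≤ q) (hz : 0 ≤ z) :
    Phi n q 0 * exp (-z) ≤ Phi n q z := by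
  rw [Phi_eq_integral, Phi_eq_integral, ← integral_mul_const]
  exact setIntegral_mono_on ((integrableOn_phiIntegrand hq le_rfl).mul_const _)
    (integrableOn_phiIntegrand hq hz) measurableSet_Ioi
    fun _ hv => phiIntegrand_zero_mul_exp_neg_le hq hz (le_of_lt hv)

lemma Phi_zero_lt_one (hn : n ≠ 0) (hq : 0 < q) : Phi n q 0 < 1 := by
  have hexp : IntegrableOn (fun v : ℝ => exp (-v)) (Ioi 0) := by
    simpa using exp_neg_integrableOn_Ioi 0 one_pos
  have hgap : 0 < ∫ v in Ioi (0 : ℝ), (exp (-v) - phiIntegrand n q 0 v) :=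
    setIntegral_pos_of_subset
      (ae_restrict_of_forall_mem measurableSet_Ioi fun _ hv =>
        sub_nonneg.2 (phiIntegrand_zero_le_exp_neg hq.le (le_of_lt hv)))
      (hexp.sub (integrableOn_phiIntegrand hq.le le_rfl)) subset_rfl (by simp)
      fun _ hv => sub_pos.2 (phiIntegrand_zero_lt_exp_neg hn hq hv)
  rw [integral_sub hexp (integrableOn_phiIntegrand hq.le le_rfl), integral_exp_neg_Ioi_zero,
    ← Phi_eq_integral] at hgap
  linarith

lemma Phi_lt_exp_neg (hq : 0 ≤ q) (hz₀ : 0 ≤ z)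
    (hz : z < -log (Phi n q 0)) : Phi n q z < exp (-z) :=
  calc Phi n q z ≤ Phi n q 0 := Phi_le_Phi_zero hq hz₀
    _ = exp (log (Phi n q 0)) := (exp_log (Phi_pos hq le_rfl)).symm
    _ < exp (-z) := exp_lt_exp.2 (by linarith)

lemma ae_Phi_ne_zero (hq : 0 ≤ q) :
    ∀ᵐ z ∂volume.restrict (Ioi (0 : ℝ)), Phi n q z ≠ 0 :=
  ae_restrict_of_forall_mem measurableSet_Ioi fun _ hz => (Phi_pos hq (le_of_lt hz)).ne'

end Phi

section Fubini

variable {k : ℕ} {q v : ℝ}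

lemma integral_pow_div_factorial_mul_phiIntegrand (hq : 0 ≤ q) (hv : 0 ≤ v) :
    ∫ z in Ioi (0 : ℝ), z ^ k / k ! * phiIntegrand (k + 1) q z v = exp (-v) := by
  have hs : 0 < 1 + q * v := by positivity
  have hfactor : ∀ z, z ^ k / k ! * phiIntegrand (k + 1) q z v
      = phiIntegrand (k + 1) q 0 v * (z ^ k / k ! * exp (-z / (1 + q * v))) := fun z => by
    rw [phiIntegrand_eq_phiIntegrand_zero_mul (z := z)]; ring
  simp_rw [hfactor]
  rw [integral_const_mul, integral_pow_div_factorial_mul_exp_neg_div_Ioi k hs, phiIntegrand_zero,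
    mul_assoc, zpow_neg, zpow_natCast, inv_mul_cancel₀ (pow_ne_zero _ hs.ne'), mul_one]

lemma integrable_pow_div_factorial_mul_phiIntegrand_prod (hq : 0 ≤ q) :
    Integrable (fun p : ℝ × ℝ => p.1 ^ k / k ! * phiIntegrand (k + 1) q p.1 p.2)
      ((volume.restrict (Ioi 0)).prod (volume.restrict (Ioi 0))) := by
  have hmeas : Measurable fun p : ℝ × ℝ => p.1 ^ k / k ! * phiIntegrand (k + 1) q p.1 p.2 := by
    have := measurable_phiIntegrand (n := k + 1) (q := q)
    fun_prop
  have hsection : ∀ v ∈ Ioi (0 : ℝ),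
      IntegrableOn (fun z => z ^ k / k ! * phiIntegrand (k + 1) q z v) (Ioi 0) := fun v hv =>
    Integrable.of_integral_ne_zero <| by
      rw [integral_pow_div_factorial_mul_phiIntegrand hq (le_of_lt hv)]; positivity
  rw [integrable_prod_iff' hmeas.aestronglyMeasurable]
  refine ⟨ae_restrict_of_forall_mem measurableSet_Ioi hsection, ?_⟩
  refine (exp_neg_integrableOn_Ioi 0 one_pos).congr_fun (fun v hv => ?_) measurableSet_Ioi
  dsimp only
  rw [neg_one_mul, ← integral_pow_div_factorial_mul_phiIntegrand (k := k) hq (le_of_lt hv)]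
  refine setIntegral_congr_fun measurableSet_Ioi fun z hz => (norm_of_nonneg ?_).symm
  have : (0 : ℝ) ≤ z := le_of_lt hz
  exact mul_nonneg (by positivity) (phiIntegrand_pos hq (le_of_lt hv)).le

lemma integrableOn_pow_div_factorial_mul_Phi (hq : 0 ≤ q) :
    IntegrableOn (fun z => z ^ k / k ! * Phi (k + 1) q z) (Ioi 0) := by
  simp only [Phi_eq_integral, ← integral_const_mul]
  exact (integrable_pow_div_factorial_mul_phiIntegrand_prod hq).integral_prod_left

lemma integral_pow_div_factorial_mul_Phi (hq : 0 ≤ q) :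
    ∫ z in Ioi (0 : ℝ), z ^ k / k ! * Phi (k + 1) q z = 1 := by
  simp only [Phi_eq_integral, ← integral_const_mul]
  rw [integral_integral_swap (integrable_pow_div_factorial_mul_phiIntegrand_prod hq),
    setIntegral_congr_fun measurableSet_Ioi fun v hv =>
      integral_pow_div_factorial_mul_phiIntegrand hq (le_of_lt hv),
    integral_exp_neg_Ioi_zero]

end Fubini

lemma integrableOn_pow_div_factorial_mul_exp_neg (k : ℕ) :
    IntegrableOn (fun z : ℝ => z ^ k / k ! * exp (-z)) (Ioi 0) := by
  simpa using integrableOn_pow_div_factorial_mul_exp_neg_div_Ioi k one_pos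

lemma integral_pow_div_factorial_mul_exp_neg (k : ℕ) :
    ∫ z in Ioi (0 : ℝ), z ^ k / k ! * exp (-z) = 1 := by
  simpa using integral_pow_div_factorial_mul_exp_neg_div_Ioi k one_pos

lemma integrableOn_pow_div_factorial_mul_exp_neg_sq_div_Phi {k n : ℕ} {q : ℝ} (hq : 0 ≤ q) :
    IntegrableOn (fun z : ℝ => z ^ k / k ! * exp (-z) ^ 2 / Phi n q z) (Ioi 0) := by
  have hΦ₀ := Phi_pos (n := n) hq le_rfl
  refine ((integrableOn_pow_div_factorial_mul_exp_neg k).const_mul (Phi n q 0)⁻¹).mono'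
    (((by fun_prop : Measurable fun z : ℝ => z ^ k / k ! * exp (-z) ^ 2).div
      measurable_Phi).aestronglyMeasurable) ?_
  filter_upwards [ae_restrict_mem measurableSet_Ioi] with z hz
  have hz : (0 : ℝ) ≤ z := le_of_lt hz
  have hΦ := Phi_pos (n := n) hq hz
  rw [norm_of_nonneg (by positivity), div_le_iff₀ hΦ]
  calc z ^ k / k ! * exp (-z) ^ 2 = z ^ k / k ! * exp (-z) * exp (-z) := by ring
    _ ≤ z ^ k / k ! * exp (-z) * ((Phi n q 0)⁻¹ * Phi n q z) := by
      gcongr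
      rw [le_inv_mul_iff₀ hΦ₀]
      exact Phi_zero_mul_exp_neg_le hq hz
    _ = _ := by ring

lemma mul_mul_one_sub_div_sq {w f g : ℝ} (hf : f ≠ 0) :
    w * f * (1 - g / f) ^ 2 = w * f - 2 * (w * g) + w * g ^ 2 / f := by
  field_simp
  ring

section WeightedChiSquare

variable {α : Type*} [MeasurableSpace α] {μ : Measure α} {w f g : α → ℝ}

lemma integrable_mul_mul_one_sub_div_sq (hf : ∀ᵐ x ∂μ, f x ≠ 0)
    (hwf : Integrable (fun x => w x * f x) μ) (hwg : Integrable (fun x => w x * g x) μ)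
    (hwgf : Integrable (fun x => w x * g x ^ 2 / f x) μ) :
    Integrable (fun x => w x * f x * (1 - g x / f x) ^ 2) μ :=
  ((hwf.sub (hwg.const_mul 2)).add hwgf).congr <| by
    filter_upwards [hf] with x hx using (mul_mul_one_sub_div_sq hx).symm

lemma integral_mul_mul_one_sub_div_sq (hf : ∀ᵐ x ∂μ, f x ≠ 0)
    (hwf : Integrable (fun x => w x * f x) μ) (hwg : Integrable (fun x => w x * g x) μ)
    (hwgf : Integrable (fun x => w x * g x ^ 2 / f x) μ) :
    ∫ x, w x * f x * (1 - g x / f x) ^ 2 ∂μ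
      = ∫ x, w x * f x ∂μ - 2 * ∫ x, w x * g x ∂μ + ∫ x, w x * g x ^ 2 / f x ∂μ := by
  have hwf_sub : Integrable (fun x => w x * f x - 2 * (w x * g x)) μ := hwf.sub (hwg.const_mul 2)
  rw [integral_congr_ae (by filter_upwards [hf] with x hx using mul_mul_one_sub_div_sq hx),
    integral_add hwf_sub hwgf, integral_sub hwf (hwg.const_mul 2),
    integral_const_mul]

end WeightedChiSquare

section Zeta

variable (k : ℕ) {q : ℝ}

lemma integrableOn_pow_div_factorial_mul_Phi_mul_one_sub_sq (hq : 0 ≤ q) :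
    IntegrableOn
      (fun z => z ^ k / k ! * Phi (k + 1) q z * (1 - exp (-z) / Phi (k + 1) q z) ^ 2) (Ioi 0) :=
  integrable_mul_mul_one_sub_div_sq (ae_Phi_ne_zero hq) (integrableOn_pow_div_factorial_mul_Phi hq)
    (integrableOn_pow_div_factorial_mul_exp_neg k)
    (integrableOn_pow_div_factorial_mul_exp_neg_sq_div_Phi hq)

lemma integral_pow_div_factorial_mul_Phi_mul_one_sub_sq (hq : 0 ≤ q) :
    ∫ z in Ioi (0 : ℝ), z ^ k / k ! * Phi (k + 1) q z * (1 - exp (-z) / Phi (k + 1) q z) ^ 2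
      = -1 + ∫ z in Ioi (0 : ℝ), z ^ k / k ! * exp (-(2 * z)) / Phi (k + 1) q z := by
  have hexp : ∀ z : ℝ, exp (-(2 * z)) = exp (-z) ^ 2 := fun z => by
    rw [sq, ← exp_add]; ring_nf
  simp only [hexp]
  rw [integral_mul_mul_one_sub_div_sq (ae_Phi_ne_zero hq)
    (integrableOn_pow_div_factorial_mul_Phi hq) (integrableOn_pow_div_factorial_mul_exp_neg k)
    (integrableOn_pow_div_factorial_mul_exp_neg_sq_div_Phi hq),
    integral_pow_div_factorial_mul_Phi hq, integral_pow_div_factorial_mul_exp_neg k]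
  ring

lemma integral_pow_div_factorial_mul_Phi_mul_one_sub_sq_pos (hq : 0 < q) :
    0 < ∫ z in Ioi (0 : ℝ),
      z ^ k / k ! * Phi (k + 1) q z * (1 - exp (-z) / Phi (k + 1) q z) ^ 2 := by
  have hδ : 0 < -log (Phi (k + 1) q 0) :=
    neg_pos.2 (log_neg (Phi_pos hq.le le_rfl) (Phi_zero_lt_one k.succ_ne_zero hq))
  refine setIntegral_pos_of_subset (t := Ioo 0 (-log (Phi (k + 1) q 0))) ?_
    (integrableOn_pow_div_factorial_mul_Phi_mul_one_sub_sq k hq.le) Ioo_subset_Ioi_self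
    (by simpa using hδ) fun z hz => ?_
  · filter_upwards [ae_restrict_mem measurableSet_Ioi] with z hz
    have := Phi_pos (n := k + 1) hq.le (le_of_lt hz)
    have : (0 : ℝ) ≤ z := le_of_lt hz
    positivity
  · have hΦz := Phi_pos (n := k + 1) hq.le hz.1.le
    have hratio : 1 < exp (-z) / Phi (k + 1) q z :=
      (one_lt_div hΦz).2 (Phi_lt_exp_neg hq.le hz.1.le hz.2)
    have : 0 < z := hz.1
    have : 0 < (1 - exp (-z) / Phi (k + 1) q z) ^ 2 := by nlinarith
    positivity

end Zeta

theorem stmt_10 (n : ℕ) (hn : 1 ≤ n) (q : ℝ) (hq : 0 < q) (ζ : ℝ)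
    (hζ : ζ = -1 + ∫ z in Set.Ioi (0 : ℝ),
      z ^ (n - 1) / (Nat.factorial (n - 1) : ℝ) * Real.exp (-(2 * z)) / Phi n q z) :
    (∫ z in Set.Ioi (0 : ℝ),
        z ^ (n - 1) / (Nat.factorial (n - 1) : ℝ) * Phi n q z *
          (1 - Real.exp (-z) / Phi n q z) ^ 2 = ζ) ∧
    0 < ζ := by
  obtain ⟨k, rfl⟩ : ∃ k, n = k + 1 := ⟨n - 1, by omega⟩
  simp only [Nat.add_sub_cancel] at hζ ⊢
  have hval := integral_pow_div_factorial_mul_Phi_mul_one_sub_sq k hq.le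
  rw [← hζ] at hval
  exact ⟨hval, hval ▸ integral_pow_div_factorial_mul_Phi_mul_one_sub_sq_pos k hq⟩
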